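/- arXiv:2003.02391 — 5 statements merged into one kernel-verified Lean document; each statement's English description precedes it below -/
import Mathlib

section
/- If there exists an order-preserving bijective code between two finite totally ordered alphabets Σ₁ and Σ₂ (i.e., a map C: Σ₁ → Σ₂* whose induced concatenation-homomorphism φ: Σ₁* → Σ₂* is a bijection that is strictly monotone with respect to lexicographic order), then |Σ₁| = |Σ₂|. -/
/-- The concatenation homomorphism `φ : Σ₁* → Σ₂*` induced by a code `C : Σ₁ → Σ₂*`. -/
def codePhi {α β : Type*} (C : α → List β) (w : List α) : List β :=
  (w.map C).flatten

/-! A bijective code induces an isomorphism of free monoids, whose inverse is again induced by a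
code. Both codes are injective, hence nonempty-valued, hence never shorten words; so
`[a] = φ⁻¹ (C a)` forces `C a` to be a single letter `c a`, and then `φ = List.map c` is bijective
exactly when `c` is. -/

open Function

section

variable {α β : Type*}

@[simp]
theorem codePhi_nil (C : α → List β) : codePhi C [] = [] := rfl

@[simp]
theorem codePhi_cons (C : α → List β) (a : α) (w : List α) :
    codePhi C (a :: w) = C a ++ codePhi C w := rfl

@[simp]
theorem codePhi_append (C : α → List β) (u v : List α) :
    codePhi C (u ++ v) = codePhi C u ++ codePhi C v := by
  simp [codePhi]

theorem codePhi_eq_map (c : α → β) : codePhi (fun a => [c a]) = List.map c := by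
  funext w
  induction w with
  | nil => rfl
  | cons a w ih => simp [ih]

theorem eq_codePhi_of_map_append {f : List α → List β}
    (hf : ∀ u v, f (u ++ v) = f u ++ f v) : f = codePhi (fun a => f [a]) := by
  have hnil : f [] = [] := by simpa using hf [] []
  funext w
  induction w with
  | nil => exact hnil
  | cons a w ih => rw [← List.singleton_append, hf, ih]; rfl

theorem exists_codePhi_inverse {C : α → List β} (hC : Bijective (codePhi C)) :
    ∃ D : β → List α, LeftInverse (codePhi D) (codePhi C) ∧
      RightInverse (codePhi D) (codePhi C) := by
  set g := surjInv hC.2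
  have hg : ∀ x y, g (x ++ y) = g x ++ g y := fun x y =>
    hC.1 <| by simp only [codePhi_append, g, rightInverse_surjInv hC.2 _]
  refine ⟨fun b => g [b], ?_, ?_⟩ <;> rw [← eq_codePhi_of_map_append hg]
  exacts [leftInverse_surjInv hC, rightInverse_surjInv hC.2]

theorem ne_nil_of_injective_codePhi {C : α → List β} (hC : Injective (codePhi C)) (a : α) :
    C a ≠ [] := fun h =>
  List.cons_ne_nil a [] <| hC <| by simp [h]

theorem length_le_length_codePhi {C : α → List β} (hC : Injective (codePhi C)) (w : List α) :
    w.length ≤ (codePhi C w).length := by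
  induction w with
  | nil => simp
  | cons a w ih =>
    have := List.length_pos_iff.mpr (ne_nil_of_injective_codePhi hC a)
    simp only [codePhi_cons, List.length_append, List.length_cons]
    omega

theorem length_eq_one_of_leftInverse_codePhi {C : α → List β} {D : β → List α}
    (h : LeftInverse (codePhi D) (codePhi C)) (hD : Injective (codePhi D)) (a : α) :
    (C a).length = 1 := by
  have hpos := List.length_pos_iff.mpr (ne_nil_of_injective_codePhi h.injective a)
  have hback : codePhi D (C a) = [a] := by simpa using h [a]
  have hle := length_le_length_codePhi hD (C a)
  rw [hback, List.length_singleton] at hle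
  omega

end

theorem card_eq_of_orderPreserving_bijective_code_general
    {α β : Type*} [Fintype α] [Fintype β]
    (C : α → List β)
    (hbij : Function.Bijective (codePhi C)) :
    Fintype.card α = Fintype.card β := by
  obtain ⟨D, hleft, hright⟩ := exists_codePhi_inverse hbij
  choose c hc using fun a =>
    List.length_eq_one_iff.mp (length_eq_one_of_leftInverse_codePhi hleft hright.injective a)
  obtain rfl : C = fun a => [c a] := funext hc
  rw [codePhi_eq_map] at hbij
  exact Fintype.card_congr (Equiv.ofBijective c (List.map_bijective_iff.mp hbij))

/-- If there is an order-preserving bijective code between two finite totally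
ordered alphabets, then they have the same cardinality. -/
theorem card_eq_of_orderPreserving_bijective_code
    {α β : Type*} [Fintype α] [LinearOrder α] [Fintype β] [LinearOrder β]
    (C : α → List β)
    (hbij : Function.Bijective (codePhi C))
    (hmono : ∀ u v : List α, List.Lex (· < ·) u v →
      List.Lex (· < ·) (codePhi C u) (codePhi C v)) :
    Fintype.card α = Fintype.card β :=
  card_eq_of_orderPreserving_bijective_code_general C hbij
end

section
/- Let q₀ < q₁ < ... < q_{n-1} < q_n = 1 be rationals in [0,1) with q₀ > 0, and set l_i = q_{i+1} − q_i. For any string s_{i_0}...s_{i_{m-1}} over the alphabet {0,...,n−1} and any p with 1 ≤ p ≤ m−1, one has ∑_{k=p}^{m-1} q_{i_k} ∏_{t=0}^{k-1} l_{i_t} < ∏_{t=0}^{p-1} l_{i_t}. -/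
/-!
Write `P k = ∏_{t<k} l_{i_t}`. Since `q_{i_k} + l_{i_k} = q_{i_k + 1} ≤ 1`, each term satisfies
`q_{i_k} P k ≤ (1 - l_{i_k}) P k = P k - P (k + 1)`, so the sum telescopes to at most
`P p - P m < P p`.
-/

open Finset

section Telescoping

variable {α : Type*} [Field α] [LinearOrder α] [IsStrictOrderedRing α]

theorem mul_prod_range_le_sub_prod_range_succ (a l : ℕ → α) (hl : ∀ t, 0 < l t)
    (ha : ∀ t, a t + l t ≤ 1) (k : ℕ) :
    a k * ∏ t ∈ range k, l t ≤ ∏ t ∈ range k, l t - ∏ t ∈ range (k + 1), l t := by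
  have hP : 0 ≤ ∏ t ∈ range k, l t := prod_nonneg fun t _ => (hl t).le
  rw [prod_range_succ]
  nlinarith [ha k]

theorem sum_Ico_mul_prod_range_lt_prod_range (a l : ℕ → α) (hl : ∀ t, 0 < l t)
    (ha : ∀ t, a t + l t ≤ 1) {p m : ℕ} (hpm : p ≤ m) :
    ∑ k ∈ Ico p m, a k * ∏ t ∈ range k, l t < ∏ t ∈ range p, l t := by
  set P : ℕ → α := fun k => ∏ t ∈ range k, l t
  calc ∑ k ∈ Ico p m, a k * P k
      ≤ ∑ k ∈ Ico p m, -(P (k + 1) - P k) :=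
        sum_le_sum fun k _ => by
          simpa [neg_sub] using mul_prod_range_le_sub_prod_range_succ a l hl ha k
    _ = P p - P m := by rw [sum_neg_distrib, sum_Ico_sub P hpm, neg_sub]
    _ < P p := sub_lt_self _ (prod_pos fun t _ => hl t)

end Telescoping

theorem sum_tail_lt_prod_general
    {n : ℕ} (q : Fin (n + 1) → ℚ)
    (hq : StrictMono q) (hlast : q (Fin.last n) = 1)
    (s : ℕ → Fin n) (m p : ℕ) (hpm : p ≤ m - 1) :
    ∑ k ∈ Finset.Ico p m,
        q (s k).castSucc * ∏ t ∈ Finset.range k, (q (s t).succ - q (s t).castSucc)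
      < ∏ t ∈ Finset.range p, (q (s t).succ - q (s t).castSucc) := by
  refine sum_Ico_mul_prod_range_lt_prod_range _ _
    (fun t => sub_pos.mpr (hq Fin.castSucc_lt_succ)) (fun t => ?_) (by omega)
  have : q (s t).succ ≤ 1 := hlast ▸ hq.monotone (Fin.le_last _)
  linarith

/-- Lemma 1: for a string `s` of length `m` over the alphabet `Fin n`, with
rationals `0 < q 0 < q 1 < ⋯ < q n = 1` and interval lengths
`l i = q (i+1) - q i`, for any `1 ≤ p ≤ m - 1`,
`∑_{k=p}^{m-1} q_{s k} ∏_{t=0}^{k-1} l_{s t} < ∏_{t=0}^{p-1} l_{s t}`. -/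
theorem sum_tail_lt_prod
    {n : ℕ} (q : Fin (n + 1) → ℚ)
    (hq : StrictMono q) (h0 : 0 < q 0) (hlast : q (Fin.last n) = 1)
    (s : ℕ → Fin n) (m p : ℕ) (hp : 1 ≤ p) (hpm : p ≤ m - 1) :
    ∑ k ∈ Finset.Ico p m,
        q (s k).castSucc * ∏ t ∈ Finset.range k, (q (s t).succ - q (s t).castSucc)
      < ∏ t ∈ Finset.range p, (q (s t).succ - q (s t).castSucc) :=
  sum_tail_lt_prod_general q hq hlast s m p hpm
end

section
/- With q_i and l_i as above, define f on strings over {0,...,n−1} by f(s_{i_0}...s_{i_{m-1}}) = q_{i_0} + ∑_{k=1}^{m-1} q_{i_k} ∏_{t=0}^{k-1} l_{i_t} (with f(ε) = 0). Then f is strictly monotone with respect to lexicographic order: str₁ < str₂ implies f(str₁) < f(str₂). -/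
/-!
`f` maps every string into `[0, 1)`, so `f (a :: w) = q_a + l_a f(w)` lies in `[q_a, q_{a+1})`.
These intervals are disjoint and ordered like the letters, and among strings with the same first
letter `f` is an increasing affine function of `f` of the tail.
-/

/-- The order-preserving map `f : Σ* → ℚ` determined by rationals
`q 0 < q 1 < ⋯ < q n`:  `f(ε) = 0` and
`f(a · w) = q a + (q (a+1) - q a) * f(w)`, which agrees with
`f(s_{i₀}⋯s_{i_{m-1}}) = q_{i₀} + ∑_{k=1}^{m-1} q_{i_k} ∏_{t=0}^{k-1} l_{i_t}`. -/
def opef {n : ℕ} (q : Fin (n + 1) → ℚ) : List (Fin n) → ℚ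
  | [] => 0
  | a :: w => q a.castSucc + (q a.succ - q a.castSucc) * opef q w

open Set

namespace opef

variable {n : ℕ} {q : Fin (n + 1) → ℚ}

lemma cons_lt_cons (hq : StrictMono q) (a : Fin n) {w₁ w₂ : List (Fin n)}
    (h : opef q w₁ < opef q w₂) : opef q (a :: w₁) < opef q (a :: w₂) := by
  have hl : 0 < q a.succ - q a.castSucc := sub_pos.2 (hq a.castSucc_lt_succ)
  simp only [opef]
  gcongr

lemma cons_mem_Ico (hq : StrictMono q) (a : Fin n) {w : List (Fin n)}
    (hw : opef q w ∈ Ico 0 1) : opef q (a :: w) ∈ Ico (q a.castSucc) (q a.succ) := by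
  have hl : 0 < q a.succ - q a.castSucc := sub_pos.2 (hq a.castSucc_lt_succ)
  obtain ⟨hw₀, hw₁⟩ := hw
  simp only [opef]
  constructor <;> nlinarith

lemma mem_Ico (hq : StrictMono q) (h0 : 0 ≤ q 0) (hlast : q (Fin.last n) ≤ 1) :
    ∀ w : List (Fin n), opef q w ∈ Ico 0 1
  | [] => by simp [opef]
  | a :: w => by
    have ha := cons_mem_Ico hq a (mem_Ico hq h0 hlast w)
    refine Ico_subset_Ico ?_ ?_ ha
    · exact h0.trans (hq.monotone (Fin.zero_le _))
    · exact (hq.monotone (Fin.le_last _)).trans hlast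

end opef

/-- `f` is strictly monotone with respect to lexicographic order on strings. -/
theorem opef_strictMono
    {n : ℕ} (q : Fin (n + 1) → ℚ)
    (hq : StrictMono q) (h0 : 0 < q 0) (hlast : q (Fin.last n) = 1) :
    ∀ str₁ str₂ : List (Fin n),
      List.Lex (· < ·) str₁ str₂ → opef q str₁ < opef q str₂ := by
  have hIco := opef.mem_Ico hq h0.le hlast.le
  intro str₁ str₂ h
  induction h with
  | @nil a w =>
    calc opef q [] = 0 := rfl
      _ < q 0 := h0
      _ ≤ q a.castSucc := hq.monotone (Fin.zero_le _)
      _ ≤ opef q (a :: w) := (opef.cons_mem_Ico hq a (hIco w)).1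
  | @cons a _ _ _ ih => exact opef.cons_lt_cons hq a ih
  | @rel a w₁ b w₂ hab =>
    calc opef q (a :: w₁) < q a.succ := (opef.cons_mem_Ico hq a (hIco w₁)).2
      _ ≤ q b.castSucc := hq.monotone (Fin.succ_le_castSucc_iff.2 hab)
      _ ≤ opef q (b :: w₂) := (opef.cons_mem_Ico hq b (hIco w₂)).1
end

section
/- For any two finite nonempty totally ordered alphabets Σ₁ and Σ₂ (each with at least two symbols), there exists an order-preserving bijection g: Σ₁* → Σ₂* with respect to lexicographic order on both sides (g need not be a monoid homomorphism). -/
/-!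
Let `⊥` be the least letter. Every string factors uniquely as `u ++ ⊥^k` with `u` not ending in `⊥`,
and `u ++ ⊥^j < v ++ ⊥^k` holds exactly when `(u, j) < (v, k)` lexicographically. Hence the strings
form the lexicographic product `C ×ₗ ℕ`, where `C` is the set of strings not ending in `⊥`. With at
least two letters, `C` is a countable dense linear order with least element `[]` and no greatest
element, so by Cantor's back-and-forth theorem its order type does not depend on the alphabet.
-/

open List Set

section CountableDenseOrderBot

variable {α β : Type*} [LinearOrder α] [OrderBot α] [LinearOrder β] [OrderBot β]

variable (α) in
def WithBot.orderIsoIoiBot : WithBot (Ioi (⊥ : α)) ≃o α where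
  toEquiv := (Equiv.optionCongr (Equiv.subtypeEquivRight fun _ => bot_lt_iff_ne_bot)).trans
    (Equiv.optionSubtypeNe ⊥)
  map_rel_iff' {a b} := by
    induction a using WithBot.recBotCoe with
    | bot => exact iff_of_true bot_le bot_le
    | coe a =>
      induction b using WithBot.recBotCoe with
      | bot => exact iff_of_false (not_le.2 a.2) (WithBot.not_coe_le_bot a)
      | coe b => exact (WithBot.coe_le_coe (a := a) (b := b)).symm

theorem Order.iso_of_countable_dense_orderBot [Countable α] [DenselyOrdered α] [NoMaxOrder α]
    [Countable β] [DenselyOrdered β] [NoMaxOrder β] : Nonempty (α ≃o β) := by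
  have : Nonempty (Ioi (⊥ : α)) := nonempty_Ioi.to_subtype
  have : Nonempty (Ioi (⊥ : β)) := nonempty_Ioi.to_subtype
  obtain ⟨e⟩ := Order.iso_of_countable_dense (Ioi (⊥ : α)) (Ioi (⊥ : β))
  exact ⟨(WithBot.orderIsoIoiBot α).symm.trans (e.withBotCongr.trans (WithBot.orderIsoIoiBot β))⟩

end CountableDenseOrderBot

namespace List

theorem lt_append_of_ne_nil {α : Type*} [LT α] (l : List α) {t : List α} (ht : t ≠ []) :
    l < l ++ t := by
  obtain ⟨a, t, rfl⟩ := exists_cons_of_ne_nil ht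
  simpa using append_left_lt (l₁ := l) (nil_lt_cons a t)

def noTrailingBot (α : Type*) [LinearOrder α] [OrderBot α] : Set (List α) :=
  {l | l.getLast? ≠ some ⊥}

variable {α : Type*} [LinearOrder α] [OrderBot α]

theorem replicate_bot_append_lt {v : List α} (hv : ∃ a ∈ v, a ≠ ⊥) {n : ℕ} (hn : v.length ≤ n)
    (x : List α) : replicate n ⊥ ++ x < v := by
  induction v generalizing n with
  | nil => simp at hv
  | cons a v ih =>
    obtain ⟨n, rfl⟩ : ∃ m, n = m + 1 := Nat.exists_eq_add_one.2 (by simp at hn; omega)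
    rcases eq_or_ne a ⊥ with rfl | ha
    · exact Lex.cons (ih (by simpa using hv) (by simpa using hn))
    · exact Lex.rel (bot_lt_iff_ne_bot.2 ha)

theorem replicate_bot_lt {v : List α} (hv : ∃ a ∈ v, a ≠ ⊥) (j : ℕ) : replicate j ⊥ < v :=
  calc replicate j ⊥ < replicate j ⊥ ++ replicate (v.length + 1) ⊥ :=
        lt_append_of_ne_nil _ (by simp)
    _ = replicate (j + (v.length + 1)) ⊥ ++ [] := by rw [← replicate_add, append_nil]
    _ < v := replicate_bot_append_lt hv (by omega) []

theorem exists_ne_bot_of_mem_noTrailingBot {v : List α} (hv : v ∈ noTrailingBot α)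
    (hne : v ≠ []) : ∃ a ∈ v, a ≠ ⊥ :=
  ⟨v.getLast hne, getLast_mem hne, fun h => hv (by rw [getLast?_eq_some_getLast hne, h])⟩

theorem mem_noTrailingBot_of_cons {a : α} {v : List α} (h : a :: v ∈ noTrailingBot α) :
    v ∈ noTrailingBot α := by
  cases v with
  | nil => simp [noTrailingBot]
  | cons b w => simpa [noTrailingBot] using h

theorem append_singleton_mem_noTrailingBot (l : List α) {t : α} (ht : t ≠ ⊥) :
    l ++ [t] ∈ noTrailingBot α := by
  simp [noTrailingBot, ht]

theorem append_replicate_bot_lt_append_replicate_bot {u v : List α} (h : u < v)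
    (hu : u ∈ noTrailingBot α) (hv : v ∈ noTrailingBot α) (j k : ℕ) :
    u ++ replicate j ⊥ < v ++ replicate k ⊥ := by
  induction h with
  | nil =>
    obtain ⟨b, hb, hb_ne⟩ := exists_ne_bot_of_mem_noTrailingBot hv (cons_ne_nil _ _)
    exact replicate_bot_lt ⟨b, mem_append_left _ hb, hb_ne⟩ j
  | cons h ih =>
    exact Lex.cons (ih (mem_noTrailingBot_of_cons hu) (mem_noTrailingBot_of_cons hv))
  | rel h => exact Lex.rel h

theorem append_replicate_bot_append_lt {u v : List α} (h : u < v) (hv : v ∈ noTrailingBot α)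
    {n : ℕ} (hn : v.length ≤ n) (x : List α) : u ++ (replicate n ⊥ ++ x) < v := by
  induction h with
  | nil =>
    exact replicate_bot_append_lt (exists_ne_bot_of_mem_noTrailingBot hv (cons_ne_nil _ _)) hn x
  | cons h ih =>
    exact Lex.cons (ih (mem_noTrailingBot_of_cons hv) (le_trans (by simp) hn))
  | rel h => exact Lex.rel h

instance : OrderBot (noTrailingBot α) where
  bot := ⟨[], by simp [noTrailingBot]⟩
  bot_le l := not_lt.1 (not_lt_nil l.1)

instance [Nontrivial α] : NoMaxOrder (noTrailingBot α) where
  exists_gt u := by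
    obtain ⟨t, ht⟩ := exists_ne (⊥ : α)
    exact ⟨⟨u ++ [t], append_singleton_mem_noTrailingBot u ht⟩,
      lt_append_of_ne_nil u (cons_ne_nil t [])⟩

instance [Nontrivial α] : DenselyOrdered (noTrailingBot α) where
  dense := by
    rintro ⟨u, hu⟩ ⟨v, hv⟩ huv
    obtain ⟨t, ht⟩ := exists_ne (⊥ : α)
    have hw : u ++ (replicate v.length ⊥ ++ [t]) ∈ noTrailingBot α := by
      rw [← append_assoc]
      exact append_singleton_mem_noTrailingBot _ ht
    exact ⟨⟨_, hw⟩, Subtype.mk_lt_mk.2 (lt_append_of_ne_nil u (by simp)),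
      append_replicate_bot_append_lt huv hv le_rfl [t]⟩

theorem exists_append_replicate_bot (l : List α) :
    ∃ u ∈ noTrailingBot α, ∃ k, u ++ replicate k ⊥ = l := by
  induction l using reverseRecOn with
  | nil => exact ⟨[], by simp [noTrailingBot], 0, rfl⟩
  | append_singleton l a ih =>
    rcases eq_or_ne a ⊥ with rfl | ha
    · obtain ⟨u, hu, k, rfl⟩ := ih
      exact ⟨u, hu, k + 1, by rw [replicate_succ', append_assoc]⟩
    · exact ⟨l ++ [a], append_singleton_mem_noTrailingBot l ha, 0, append_nil _⟩

variable (α) in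
noncomputable def appendReplicateBotIso : noTrailingBot α ×ₗ ℕ ≃o List α := by
  refine StrictMono.orderIsoOfSurjective (fun p => (ofLex p).1.1 ++ replicate (ofLex p).2 ⊥) ?_ ?_
  · rintro ⟨⟨u, hu⟩, j⟩ ⟨⟨v, hv⟩, k⟩ h
    rcases Prod.Lex.lt_iff.1 h with huv | ⟨huv, hjk⟩
    · exact append_replicate_bot_lt_append_replicate_bot huv hu hv j k
    · obtain ⟨d, rfl⟩ := Nat.exists_eq_add_of_lt hjk
      obtain rfl : u = v := congrArg Subtype.val huv
      show u ++ replicate j ⊥ < u ++ replicate (j + d + 1) ⊥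
      rw [add_assoc, replicate_add, ← append_assoc]
      exact lt_append_of_ne_nil _ (by simp)
  · intro l
    obtain ⟨u, hu, k, rfl⟩ := exists_append_replicate_bot l
    exact ⟨toLex (⟨u, hu⟩, k), rfl⟩

end List

/-- For any two finite totally ordered alphabets, each with at least two
symbols, there exists an order-preserving bijection between their sets of
strings with respect to lexicographic order. -/
theorem exists_orderPreserving_bijection_strings
    {α β : Type*} [Fintype α] [LinearOrder α] [Fintype β] [LinearOrder β]
    (hα : ∃ a b : α, a < b) (hβ : ∃ a b : β, a < b) :
    ∃ g : List α → List β, Function.Bijective g ∧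
      ∀ u v : List α, List.Lex (· < ·) u v → List.Lex (· < ·) (g u) (g v) := by
  obtain ⟨a, b, hab⟩ := hα
  obtain ⟨a', b', hab'⟩ := hβ
  have : Nontrivial α := ⟨a, b, hab.ne⟩
  have : Nontrivial β := ⟨a', b', hab'.ne⟩
  let _ := Fintype.toOrderBot α
  let _ := Fintype.toOrderBot β
  obtain ⟨e⟩ := Order.iso_of_countable_dense_orderBot (α := noTrailingBot α) (β := noTrailingBot β)
  let g := (appendReplicateBotIso α).symm.trans
    ((Prod.Lex.prodLexCongr e (OrderIso.refl ℕ)).trans (appendReplicateBotIso β))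
  exact ⟨g, g.bijective, fun u v h => g.strictMono h⟩
end

section
/- With f as defined above and q_0 > 0, if str₁ < str₂ due to differing first at position p with index i_p < j_p, then f(str₂) − f(str₁) > 0; in particular f(str₂) − f(str₁) > (q_{j_p} − q_{i_p} − l_{i_p}) · ∏_{t=0}^{p-1} l_{i_t} ≥ 0. -/
/-!
Write `f(g, L) = ∑_{k<L} q_{g k} ∏_{t<k} l_{g t}` (`code` below, with `l = gap`). Peeling off the first letter gives
`f(g, L + 1) = q_{g 0} + l_{g 0} · f(g ∘ succ, L)`, so by induction `f < 1`, and hence a nonempty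
word starting with `a` has code in `[q_a, q_{a+1})`. Splitting both words after the common prefix
of length `p` writes `f(str₂) - f(str₁)` as `∏_{t<p} l_{i t}` times the difference of the codes of
the tails, and the tails start with `j p` and `i p` respectively.
-/

open Finset

namespace IntervalCode

variable {n : ℕ} (q : Fin (n + 1) → ℚ)

def gap (a : Fin n) : ℚ := q a.succ - q a.castSucc

def code (g : ℕ → Fin n) (L : ℕ) : ℚ :=
  ∑ k ∈ range L, q (g k).castSucc * ∏ t ∈ range k, gap q (g t)

variable {q}

theorem gap_pos (hq : StrictMono q) (a : Fin n) : 0 < gap q a :=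
  sub_pos.mpr (hq Fin.castSucc_lt_succ)

theorem code_succ (g : ℕ → Fin n) (L : ℕ) :
    code q g (L + 1) = q (g 0).castSucc + gap q (g 0) * code q (fun k => g (k + 1)) L := by
  simp only [code, sum_range_succ', prod_range_succ', prod_range_zero, mul_one, mul_sum]
  rw [add_comm]
  congr 1
  exact sum_congr rfl fun k _ => by ring

theorem code_add (g : ℕ → Fin n) (p L : ℕ) :
    code q g (p + L) = code q g p + (∏ t ∈ range p, gap q (g t)) * code q (fun k => g (p + k)) L := by
  simp only [code, sum_range_add, prod_range_add, mul_sum]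
  congr 1
  exact sum_congr rfl fun k _ => by ring

theorem code_congr {g g' : ℕ → Fin n} {p : ℕ} (h : ∀ t < p, g t = g' t) :
    code q g p = code q g' p :=
  sum_congr rfl fun k hk => by
    rw [h k (mem_range.mp hk)]
    congr 1
    exact prod_congr rfl fun t ht => by rw [h t ((mem_range.mp ht).trans (mem_range.mp hk))]

theorem code_succ_lt_of_lt_one (hq : StrictMono q) {g : ℕ → Fin n} {L : ℕ}
    (h : code q (fun k => g (k + 1)) L < 1) : code q g (L + 1) < q (g 0).succ := by
  have hmul := mul_lt_mul_of_pos_left h (gap_pos hq (g 0))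
  rw [code_succ]
  unfold gap at hmul ⊢
  linarith

theorem code_lt_one (hq : StrictMono q) (hlast : q (Fin.last n) = 1) (g : ℕ → Fin n) (L : ℕ) :
    code q g L < 1 := by
  induction L generalizing g with
  | zero => simp [code]
  | succ L ih =>
    calc code q g (L + 1) < q (g 0).succ := code_succ_lt_of_lt_one hq (ih _)
      _ ≤ 1 := hlast ▸ hq.monotone (Fin.le_last _)

theorem code_succ_lt (hq : StrictMono q) (hlast : q (Fin.last n) = 1) (g : ℕ → Fin n) (L : ℕ) :
    code q g (L + 1) < q (g 0).succ :=
  code_succ_lt_of_lt_one hq (code_lt_one hq hlast _ L)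

theorem le_code_succ (hq : StrictMono q) (h0 : 0 ≤ q 0) (g : ℕ → Fin n) (L : ℕ) :
    q (g 0).castSucc ≤ code q g (L + 1) := by
  have hcode : 0 ≤ code q (fun k => g (k + 1)) L :=
    sum_nonneg fun k _ => mul_nonneg (h0.trans (hq.monotone (Fin.zero_le _)))
      (prod_nonneg fun t _ => (gap_pos hq _).le)
  rw [code_succ]
  linarith [mul_nonneg (gap_pos hq (g 0)).le hcode]

end IntervalCode

open IntervalCode in
/-- Case 2 of the monotonicity proof: if `str₁` (indices `i`, length `m`) and
`str₂` (indices `j`, length `n'`) agree at positions `0..p-1` and `i p < j p`,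
then `f(str₂) - f(str₁) > (q_{j p} - q_{i p} - l_{i p}) · ∏_{t<p} l_{i t} ≥ 0`;
in particular `f(str₂) - f(str₁) > 0`.  Here
`f = ∑_{k<len} q_{idx k} ∏_{t<k} l_{idx t}` and `l a = q (a+1) - q a`. -/
theorem opef_sub_pos_of_first_diff
    {n : ℕ} (q : Fin (n + 1) → ℚ)
    (hq : StrictMono q) (h0 : 0 < q 0) (hlast : q (Fin.last n) = 1)
    (i j : ℕ → Fin n) (m n' p : ℕ)
    (hpm : p < m) (hpn : p < n')
    (hagree : ∀ t, t < p → i t = j t) (hdiff : i p < j p) :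
    (∑ k ∈ Finset.range n',
        q (j k).castSucc * ∏ t ∈ Finset.range k, (q (j t).succ - q (j t).castSucc))
      - (∑ k ∈ Finset.range m,
        q (i k).castSucc * ∏ t ∈ Finset.range k, (q (i t).succ - q (i t).castSucc))
      > (q (j p).castSucc - q (i p).castSucc - (q (i p).succ - q (i p).castSucc))
          * ∏ t ∈ Finset.range p, (q (i t).succ - q (i t).castSucc)
    ∧ 0 ≤ (q (j p).castSucc - q (i p).castSucc - (q (i p).succ - q (i p).castSucc))
          * ∏ t ∈ Finset.range p, (q (i t).succ - q (i t).castSucc)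
    ∧ 0 < (∑ k ∈ Finset.range n',
        q (j k).castSucc * ∏ t ∈ Finset.range k, (q (j t).succ - q (j t).castSucc))
      - (∑ k ∈ Finset.range m,
        q (i k).castSucc * ∏ t ∈ Finset.range k, (q (i t).succ - q (i t).castSucc)) := by
  obtain ⟨a, rfl⟩ : ∃ a, m = p + (a + 1) := ⟨m - p - 1, by omega⟩
  obtain ⟨b, rfl⟩ : ∃ b, n' = p + (b + 1) := ⟨n' - p - 1, by omega⟩
  change code q j (p + (b + 1)) - code q i (p + (a + 1)) >
      (q (j p).castSucc - q (i p).castSucc - gap q (i p)) * ∏ t ∈ range p, gap q (i t) ∧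
    0 ≤ (q (j p).castSucc - q (i p).castSucc - gap q (i p)) * ∏ t ∈ range p, gap q (i t) ∧
    0 < code q j (p + (b + 1)) - code q i (p + (a + 1))
  set P := ∏ t ∈ range p, gap q (i t)
  have hP : 0 < P := prod_pos fun t _ => gap_pos hq _
  have hdiff_eq : code q j (p + (b + 1)) - code q i (p + (a + 1)) =
      P * (code q (fun k => j (p + k)) (b + 1) - code q (fun k => i (p + k)) (a + 1)) := by
    have hprod : ∏ t ∈ range p, gap q (j t) = P :=
      prod_congr rfl fun t ht => by rw [hagree t (mem_range.mp ht)]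
    rw [code_add j p, code_add i p, code_congr hagree, hprod]
    ring
  have hj := le_code_succ hq h0.le (fun k => j (p + k)) b
  have hi := code_succ_lt hq hlast (fun k => i (p + k)) a
  have hgap : q (i p).succ ≤ q (j p).castSucc := hq.monotone (Fin.succ_le_castSucc_iff.mpr hdiff)
  simp only [add_zero] at hi hj
  have hD : 0 ≤ q (j p).castSucc - q (i p).castSucc - gap q (i p) := by unfold gap; linarith
  have hlt : (q (j p).castSucc - q (i p).castSucc - gap q (i p)) * P <
      code q j (p + (b + 1)) - code q i (p + (a + 1)) := by
    rw [hdiff_eq, mul_comm]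
    exact mul_lt_mul_of_pos_left (by unfold gap; linarith) hP
  exact ⟨hlt, mul_nonneg hD hP.le, (mul_nonneg hD hP.le).trans_lt hlt⟩
end
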